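/- Let H₀ ≠ 0 and a(t) = e^{H₀ t}. The vector field X₇ = −(1/H₀) ∂_t + r ∂_r Lie-derives each of the four coframe one-forms h¹ = dt, h² = a(t) dr, h³ = a(t) r dθ, h⁴ = a(t) r sinθ dφ to zero: for each a ∈ {1,2,3,4} and each coordinate index μ, X₇^ν ∂_ν h^a_μ + h^a_ν ∂_μ X₇^ν = 0 at every point of U = {(t,r,θ,φ) : r > 0, 0 < θ < π}; moreover the Lie derivative of the k = 0 spin-connection one-forms ω_{23} = −dθ, ω_{24} = −sinθ dφ, ω_{34} = −cosθ dφ (all other ω_{ab} = 0) along X₇ also vanishes: X₇^ν ∂_ν ω_{abμ} + ω_{abν} ∂_μ X₇^ν = 0 on U. Hence X₇ is an affine frame symmetry of the k = 0 Teleparallel Robertson–Walker geometry with a(t) = e^{H₀ t}. -/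

import Mathlib

/-!
STATEMENT 17: Let H₀ ≠ 0 and a(t) = e^{H₀ t}. The vector field
X₇ = −(1/H₀) ∂_t + r ∂_r Lie-derives each of the coframe one-forms
h¹ = dt, h² = a dr, h³ = a r dθ, h⁴ = a r sinθ dφ to zero:
X₇^ν ∂_ν h^a_μ + h^a_ν ∂_μ X₇^ν = 0 on U = {(t,r,θ,φ) : r > 0, 0 < θ < π};
moreover the Lie derivative of the k = 0 spin-connection one-forms
ω_{23} = −dθ, ω_{24} = −sinθ dφ, ω_{34} = −cosθ dφ (all other ω_{ab} = 0,
ω antisymmetric) along X₇ also vanishes. Hence X₇ is an affine frame symmetry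
of the k = 0 TRW geometry with a(t) = e^{H₀ t}.
Coordinates: x : Fin 4 → ℝ with t = x 0, r = x 1, θ = x 2, φ = x 3;
frame indices 1..4 are Fin 4 indices 0..3.
-/

open Real

noncomputable section

/-- Partial derivative in the μ-th coordinate direction. -/
def pd (μ : Fin 4) (f : (Fin 4 → ℝ) → ℝ) (x : Fin 4 → ℝ) : ℝ :=
  fderiv ℝ f x (Pi.single μ 1)

/-- The vector field X₇ = −(1/H₀) ∂_t + r ∂_r. -/
def X7 (H₀ : ℝ) (x : Fin 4 → ℝ) : Fin 4 → ℝ :=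
  ![-(1 / H₀), x 1, 0, 0]

/-- The coframe one-forms h¹ = dt, h² = a(t) dr, h³ = a(t) r dθ,
h⁴ = a(t) r sinθ dφ with a(t) = e^{H₀ t}: `coframe H₀ x a μ` is h^a_μ(x). -/
def coframe (H₀ : ℝ) (x : Fin 4 → ℝ) : Matrix (Fin 4) (Fin 4) ℝ :=
  Matrix.diagonal
    ![1, Real.exp (H₀ * x 0), Real.exp (H₀ * x 0) * x 1,
      Real.exp (H₀ * x 0) * x 1 * Real.sin (x 2)]

/-- The k = 0 spin-connection one-forms: ω_{23} = −dθ, ω_{24} = −sinθ dφ,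
ω_{34} = −cosθ dφ, antisymmetric in (a,b), all others zero:
`conn x a b μ` is ω_{abμ}(x). -/
def conn (x : Fin 4 → ℝ) (a b μ : Fin 4) : ℝ :=
  if a = 1 ∧ b = 2 ∧ μ = 2 then -1
  else if a = 2 ∧ b = 1 ∧ μ = 2 then 1
  else if a = 1 ∧ b = 3 ∧ μ = 3 then -Real.sin (x 2)
  else if a = 3 ∧ b = 1 ∧ μ = 3 then Real.sin (x 2)
  else if a = 2 ∧ b = 3 ∧ μ = 3 then -Real.cos (x 2)
  else if a = 3 ∧ b = 2 ∧ μ = 3 then Real.cos (x 2)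
  else 0

/-!
X₇ generates the flow φ_s(t, r, θ, φ) = (t − s/H₀, eˢ r, θ, φ). Since H₀ ≠ 0 gives
a(t − s/H₀) = e^{−s} a(t) while φ_s^* dr = eˢ dr, every h^a is φ_s-invariant, and so is every
ω_{ab}, which depends on θ only and has no dr-component. The Lie derivative along X₇ is the
s-derivative at s = 0 of the pull-back by φ_s, hence vanishes.
-/

def lieDerivOneForm (X α : (Fin 4 → ℝ) → Fin 4 → ℝ) (x : Fin 4 → ℝ) (μ : Fin 4) : ℝ :=
  (∑ ν, X x ν * pd ν (fun y => α y μ) x) + ∑ ν, α x ν * pd μ (fun y => X y ν) x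

theorem sum_mul_pd_eq_fderiv (f : (Fin 4 → ℝ) → ℝ) (x v : Fin 4 → ℝ) :
    ∑ ν, v ν * pd ν f x = fderiv ℝ f x v := by
  conv_rhs => rw [pi_eq_sum_univ' v, map_sum]
  simp [pd]

theorem pd_apply (μ i : Fin 4) (x : Fin 4 → ℝ) :
    pd μ (fun y => y i) x = if μ = i then 1 else 0 := by
  simp [pd, (hasFDerivAt_apply i x).fderiv, Pi.single_apply, eq_comm]

theorem pd_const (μ : Fin 4) (c : ℝ) (x : Fin 4 → ℝ) : pd μ (fun _ => c) x = 0 := by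
  simp [pd]

theorem pd_X7 (H₀ : ℝ) (μ ν : Fin 4) (x : Fin 4 → ℝ) :
    pd μ (fun y => X7 H₀ y ν) x = if μ = 1 ∧ ν = 1 then 1 else 0 := by
  fin_cases ν <;> simp [X7, pd_apply, pd_const]

theorem lieDerivOneForm_X7 (H₀ : ℝ) (α : (Fin 4 → ℝ) → Fin 4 → ℝ) (x : Fin 4 → ℝ) (μ : Fin 4) :
    lieDerivOneForm (X7 H₀) α x μ
      = fderiv ℝ (fun y => α y μ) x (X7 H₀ x) + if μ = 1 then α x 1 else 0 := by
  by_cases hμ : μ = 1 <;> simp [lieDerivOneForm, sum_mul_pd_eq_fderiv, pd_X7, hμ]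

def X7Flow (H₀ : ℝ) (x : Fin 4 → ℝ) (s : ℝ) : Fin 4 → ℝ :=
  ![x 0 - s / H₀, exp s * x 1, x 2, x 3]

theorem X7Flow_zero (H₀ : ℝ) (x : Fin 4 → ℝ) : X7Flow H₀ x 0 = x := by
  ext i; fin_cases i <;> simp [X7Flow]

theorem hasDerivAt_X7Flow (H₀ : ℝ) (x : Fin 4 → ℝ) :
    HasDerivAt (X7Flow H₀ x) (X7 H₀ x) 0 := by
  rw [hasDerivAt_pi]
  intro i
  fin_cases i
  · simpa [X7Flow, X7] using ((hasDerivAt_id (0:ℝ)).div_const H₀).const_sub (x 0)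
  · simpa [X7Flow, X7] using (hasDerivAt_exp 0).mul_const (x 1)
  · exact hasDerivAt_const _ _
  · exact hasDerivAt_const _ _

/-- The Jacobian of `X7Flow H₀ · s` is `diag(1, eˢ, 1, 1)`, so this is `(φ_s^* α)_μ (x)`. -/
def X7FlowPullback (H₀ : ℝ) (α : (Fin 4 → ℝ) → Fin 4 → ℝ) (x : Fin 4 → ℝ) (μ : Fin 4)
    (s : ℝ) : ℝ :=
  α (X7Flow H₀ x s) μ * if μ = 1 then exp s else 1

theorem hasDerivAt_X7FlowPullback {H₀ : ℝ} {α : (Fin 4 → ℝ) → Fin 4 → ℝ} {x : Fin 4 → ℝ}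
    {μ : Fin 4} (hα : DifferentiableAt ℝ (fun y => α y μ) x) :
    HasDerivAt (X7FlowPullback H₀ α x μ) (lieDerivOneForm (X7 H₀) α x μ) 0 := by
  have hcomp : HasDerivAt (fun s => α (X7Flow H₀ x s) μ)
      (fderiv ℝ (fun y => α y μ) x (X7 H₀ x)) 0 :=
    hα.hasFDerivAt.comp_hasDerivAt_of_eq 0 (hasDerivAt_X7Flow H₀ x)
      (X7Flow_zero H₀ x).symm
  rw [lieDerivOneForm_X7]
  unfold X7FlowPullback
  by_cases hμ : μ = 1
  · subst hμ
    simpa [X7Flow_zero] using hcomp.fun_mul (hasDerivAt_exp 0)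
  · simpa [hμ] using hcomp

theorem lieDerivOneForm_X7_eq_zero {H₀ : ℝ} {α : (Fin 4 → ℝ) → Fin 4 → ℝ} {x : Fin 4 → ℝ}
    {μ : Fin 4} (hα : DifferentiableAt ℝ (fun y => α y μ) x)
    (hinv : ∀ s, X7FlowPullback H₀ α x μ s = α x μ) :
    lieDerivOneForm (X7 H₀) α x μ = 0 :=
  (hasDerivAt_X7FlowPullback hα).unique (by simpa [funext hinv] using hasDerivAt_const 0 (α x μ))

theorem differentiableAt_coframe (H₀ : ℝ) (a μ : Fin 4) (x : Fin 4 → ℝ) :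
    DifferentiableAt ℝ (fun y => coframe H₀ y a μ) x := by
  simp only [coframe, Matrix.diagonal_apply]
  split_ifs
  · fin_cases a <;>
      simp only [Fin.zero_eta, Fin.mk_one, Fin.reduceFinMk, Matrix.cons_val_zero,
        Matrix.cons_val_one, Matrix.cons_val] <;> fun_prop
  · fun_prop

theorem differentiableAt_conn (a b μ : Fin 4) (x : Fin 4 → ℝ) :
    DifferentiableAt ℝ (fun y => conn y a b μ) x := by
  unfold conn
  split_ifs <;> fun_prop

theorem exp_mul_X7Flow_apply_zero {H₀ : ℝ} (hH₀ : H₀ ≠ 0) (x : Fin 4 → ℝ) (s : ℝ) :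
    exp (H₀ * X7Flow H₀ x s 0) = exp (H₀ * x 0) * exp (-s) := by
  rw [← exp_add]
  congr 1
  simp only [X7Flow, Matrix.cons_val_zero]
  field_simp
  ring

theorem X7FlowPullback_coframe {H₀ : ℝ} (hH₀ : H₀ ≠ 0) (x : Fin 4 → ℝ) (a μ : Fin 4) (s : ℝ) :
    X7FlowPullback H₀ (fun y => coframe H₀ y a) x μ s = coframe H₀ x a μ := by
  simp only [X7FlowPullback, coframe, Matrix.diagonal_apply, exp_mul_X7Flow_apply_zero hH₀]
  fin_cases a <;> fin_cases μ <;> simp [X7Flow, exp_neg, mul_assoc, (exp_pos s).ne']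

theorem X7FlowPullback_conn (H₀ : ℝ) (x : Fin 4 → ℝ) (a b μ : Fin 4) (s : ℝ) :
    X7FlowPullback H₀ (fun y => conn y a b) x μ s = conn x a b μ := by
  by_cases hμ : μ = 1 <;> simp [X7FlowPullback, conn, X7Flow, hμ]

theorem X7_affine_frame_symmetry_general (H₀ : ℝ) (hH₀ : H₀ ≠ 0)
    (x : Fin 4 → ℝ) :
    (∀ a μ : Fin 4,
      (∑ ν, X7 H₀ x ν * pd ν (fun y => coframe H₀ y a μ) x)
        + (∑ ν, coframe H₀ x a ν * pd μ (fun y => X7 H₀ y ν) x) = 0) ∧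
    (∀ a b μ : Fin 4,
      (∑ ν, X7 H₀ x ν * pd ν (fun y => conn y a b μ) x)
        + (∑ ν, conn x a b ν * pd μ (fun y => X7 H₀ y ν) x) = 0) :=
  ⟨fun a μ => lieDerivOneForm_X7_eq_zero (α := fun y => coframe H₀ y a)
      (differentiableAt_coframe H₀ a μ x) (X7FlowPullback_coframe hH₀ x a μ),
    fun a b μ => lieDerivOneForm_X7_eq_zero (α := fun y => conn y a b)
      (differentiableAt_conn a b μ x) (X7FlowPullback_conn H₀ x a b μ)⟩

/-- X₇ is an affine frame symmetry of the k = 0 TRW geometry with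
a(t) = e^{H₀ t}: the Lie derivatives along X₇ of the coframe one-forms and of
the spin-connection one-forms all vanish on U. -/
theorem X7_affine_frame_symmetry (H₀ : ℝ) (hH₀ : H₀ ≠ 0)
    (x : Fin 4 → ℝ) (hr : 0 < x 1) (hθ₁ : 0 < x 2) (hθ₂ : x 2 < Real.pi) :
    (∀ a μ : Fin 4,
      (∑ ν, X7 H₀ x ν * pd ν (fun y => coframe H₀ y a μ) x)
        + (∑ ν, coframe H₀ x a ν * pd μ (fun y => X7 H₀ y ν) x) = 0) ∧
    (∀ a b μ : Fin 4,
      (∑ ν, X7 H₀ x ν * pd ν (fun y => conn y a b μ) x)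
        + (∑ ν, conn x a b ν * pd μ (fun y => X7 H₀ y ν) x) = 0) :=
  X7_affine_frame_symmetry_general H₀ hH₀ x

end
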